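/- arXiv:math/0512112 — 3 statements merged into one kernel-verified Lean document; each statement's English description precedes it below -/
import Mathlib

section
/- Let h : Ω → 𝔻 be a harmonic map into the hyperbolic plane model (𝔻, σ²|dz|² with σ(z) = 2/(1−|z|²)), i.e. h satisfies h_{w w̄} + (2 conj(h)/(1 − |h|²)) h_w h_{w̄} = 0. Define J(h) = σ(h)²(|h_w|² − |h_{w̄}|²) and φ = σ(h)² h_w h̄_w. If h_w and h̄_w never vanish and ω := (1/2) log(|h_w|/|h̄_w|), then Δ₀ ω = 2 sinh(2ω) |φ|, where Δ₀ is the Euclidean Laplacian in w. -/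
open Complex

noncomputable section

/-- Wirtinger derivative `∂/∂w`. -/
def wdz (f : ℂ → ℂ) (w : ℂ) : ℂ :=
  (fderiv ℝ f w 1 - Complex.I * fderiv ℝ f w Complex.I) / 2

/-- Wirtinger derivative `∂/∂w̄`. -/
def wdzbar (f : ℂ → ℂ) (w : ℂ) : ℂ :=
  (fderiv ℝ f w 1 + Complex.I * fderiv ℝ f w Complex.I) / 2

/-- Euclidean Laplacian of a real function of `w = u + iv`. -/
def lap (f : ℂ → ℝ) (w : ℂ) : ℝ :=
  fderiv ℝ (fun z => fderiv ℝ f z 1) w 1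
    + fderiv ℝ (fun z => fderiv ℝ f z Complex.I) w Complex.I

/-- The hyperbolic conformal factor `σ(z) = 2/(1-|z|²)` on the unit disk. -/
def σD (z : ℂ) : ℝ := 2 / (1 - ‖z‖ ^ 2)

lemma wdz_congr {f g : ℂ → ℂ} {w : ℂ} (h : f =ᶠ[nhds w] g) : wdz f w = wdz g w := by
  unfold wdz; rw [h.fderiv_eq]

lemma wdz_add {f g : ℂ → ℂ} {w : ℂ} (hf : DifferentiableAt ℝ f w)
    (hg : DifferentiableAt ℝ g w) :
    wdz (fun z => f z + g z) w = wdz f w + wdz g w := by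
  unfold wdz; rw [fderiv_fun_add hf hg]; simp; ring

lemma wdz_neg {f : ℂ → ℂ} {w : ℂ} :
    wdz (fun z => -f z) w = - wdz f w := by
  unfold wdz; rw [fderiv_fun_neg]; simp; ring

lemma wdz_sub {f g : ℂ → ℂ} {w : ℂ} (hf : DifferentiableAt ℝ f w)
    (hg : DifferentiableAt ℝ g w) :
    wdz (fun z => f z - g z) w = wdz f w - wdz g w := by
  unfold wdz; rw [fderiv_fun_sub hf hg]; simp; ring

lemma wdz_const {c w : ℂ} : wdz (fun _ => c) w = 0 := by
  unfold wdz; rw [fderiv_fun_const]; simp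

lemma wdz_mul {f g : ℂ → ℂ} {w : ℂ} (hf : DifferentiableAt ℝ f w)
    (hg : DifferentiableAt ℝ g w) :
    wdz (fun z => f z * g z) w = wdz f w * g w + f w * wdz g w := by
  unfold wdz; rw [fderiv_fun_mul hf hg]; simp [smul_eq_mul]; ring

lemma wdzbar_mul {f g : ℂ → ℂ} {w : ℂ} (hf : DifferentiableAt ℝ f w)
    (hg : DifferentiableAt ℝ g w) :
    wdzbar (fun z => f z * g z) w = wdzbar f w * g w + f w * wdzbar g w := by
  unfold wdzbar; rw [fderiv_fun_mul hf hg]; simp [smul_eq_mul]; ring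

lemma wdz_conj {f : ℂ → ℂ} {w : ℂ} (hf : DifferentiableAt ℝ f w) :
    wdz (fun z => (starRingEnd ℂ) (f z)) w = (starRingEnd ℂ) (wdzbar f w) := by
  have : fderiv ℝ (fun z => (starRingEnd ℂ) (f z)) w
      = (Complex.conjCLE.toContinuousLinearMap).comp (fderiv ℝ f w) := by
    exact (Complex.conjCLE.toContinuousLinearMap.hasFDerivAt.comp w hf.hasFDerivAt).fderiv
  unfold wdz wdzbar
  rw [this]
  simp [map_add, map_div₀, map_ofNat]
  ring

lemma wdzbar_conj {f : ℂ → ℂ} {w : ℂ} (hf : DifferentiableAt ℝ f w) :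
    wdzbar (fun z => (starRingEnd ℂ) (f z)) w = (starRingEnd ℂ) (wdz f w) := by
  have : fderiv ℝ (fun z => (starRingEnd ℂ) (f z)) w
      = (Complex.conjCLE.toContinuousLinearMap).comp (fderiv ℝ f w) := by
    exact (Complex.conjCLE.toContinuousLinearMap.hasFDerivAt.comp w hf.hasFDerivAt).fderiv
  unfold wdz wdzbar
  rw [this]
  simp [map_add, map_div₀, map_ofNat]
  try ring

lemma wdz_const_mul {f : ℂ → ℂ} {w c : ℂ} (hf : DifferentiableAt ℝ f w) :
    wdz (fun z => c * f z) w = c * wdz f w := by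
  unfold wdz; rw [fderiv_const_mul hf c]; simp [smul_eq_mul]; ring

lemma contDiff_wdz {f : ℂ → ℂ} (hf : ContDiff ℝ (⊤ : ℕ∞) f) : ContDiff ℝ (⊤ : ℕ∞) (fun z => wdz f z) := by
  have h1 : ContDiff ℝ (⊤ : ℕ∞) (fun z => fderiv ℝ f z) := hf.fderiv_right (by simp)
  have h2 : ContDiff ℝ (⊤ : ℕ∞) (fun z => fderiv ℝ f z 1) := h1.clm_apply contDiff_const
  have h3 : ContDiff ℝ (⊤ : ℕ∞) (fun z => fderiv ℝ f z Complex.I) := h1.clm_apply contDiff_const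
  exact ((h2.sub (contDiff_const.mul h3)).div_const 2)

lemma contDiff_wdzbar {f : ℂ → ℂ} (hf : ContDiff ℝ (⊤ : ℕ∞) f) : ContDiff ℝ (⊤ : ℕ∞) (fun z => wdzbar f z) := by
  have h1 : ContDiff ℝ (⊤ : ℕ∞) (fun z => fderiv ℝ f z) := hf.fderiv_right (by simp)
  have h2 : ContDiff ℝ (⊤ : ℕ∞) (fun z => fderiv ℝ f z 1) := h1.clm_apply contDiff_const
  have h3 : ContDiff ℝ (⊤ : ℕ∞) (fun z => fderiv ℝ f z Complex.I) := h1.clm_apply contDiff_const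
  exact ((h2.add (contDiff_const.mul h3)).div_const 2)

lemma fderiv_fderiv_apply {f : ℂ → ℂ} (hf : ContDiff ℝ (⊤ : ℕ∞) f) (w u v : ℂ) :
    fderiv ℝ (fun z => fderiv ℝ f z v) w u = fderiv ℝ (fderiv ℝ f) w u v := by
  have hD : DifferentiableAt ℝ (fderiv ℝ f) w :=
    ((hf.fderiv_right (m := (⊤ : ℕ∞)) (by simp)).differentiable (by simp)) w
  rw [fderiv_clm_apply hD (differentiableAt_const v)]
  simp

lemma wdz_wdzbar_comm {f : ℂ → ℂ} (hf : ContDiff ℝ (⊤ : ℕ∞) f) (w : ℂ) :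
    wdz (fun z => wdzbar f z) w = wdzbar (fun z => wdz f z) w := by
  have h1 : ∀ v : ℂ, DifferentiableAt ℝ (fun z => fderiv ℝ f z v) w := fun v =>
    ((((hf.fderiv_right (m := (⊤ : ℕ∞)) (by simp)).clm_apply contDiff_const).differentiable (by simp)) w)
  have hsymm := (hf.contDiffAt (x := w)).isSymmSndFDerivAt (by rw [minSmoothness_of_isRCLikeNormedField]; exact (WithTop.coe_le_coe.mpr le_top : ((2 : ℕ∞) : WithTop ℕ∞) ≤ ((⊤ : ℕ∞) : WithTop ℕ∞)))
  have key : ∀ v : ℂ, fderiv ℝ (fun z => wdzbar f z) w v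
      = (fderiv ℝ (fderiv ℝ f) w v 1 + Complex.I * fderiv ℝ (fderiv ℝ f) w v Complex.I) / 2 := by
    intro v
    have he : (fun z => wdzbar f z)
        = fun z => (2:ℂ)⁻¹ * (fderiv ℝ f z 1 + Complex.I * fderiv ℝ f z Complex.I) := by
      funext z; simp [wdzbar]; ring
    rw [he]
    rw [fderiv_const_mul ((h1 1).fun_add ((h1 Complex.I).const_mul Complex.I)),
      fderiv_fun_add (h1 1) ((h1 Complex.I).const_mul Complex.I),
      fderiv_const_mul (h1 Complex.I)]
    simp [fderiv_fderiv_apply hf, smul_eq_mul]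
    ring
  have key2 : ∀ v : ℂ, fderiv ℝ (fun z => wdz f z) w v
      = (fderiv ℝ (fderiv ℝ f) w v 1 - Complex.I * fderiv ℝ (fderiv ℝ f) w v Complex.I) / 2 := by
    intro v
    have he : (fun z => wdz f z)
        = fun z => (2:ℂ)⁻¹ * (fderiv ℝ f z 1 - Complex.I * fderiv ℝ f z Complex.I) := by
      funext z; simp [wdz]; ring
    rw [he]
    rw [fderiv_const_mul ((h1 1).fun_sub ((h1 Complex.I).const_mul Complex.I)),
      fderiv_fun_sub (h1 1) ((h1 Complex.I).const_mul Complex.I),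
      fderiv_const_mul (h1 Complex.I)]
    simp [fderiv_fderiv_apply hf, smul_eq_mul]
    ring
  have e1 : wdz (fun z => wdzbar f z) w
      = (fderiv ℝ (fun z => wdzbar f z) w 1 - Complex.I * fderiv ℝ (fun z => wdzbar f z) w Complex.I) / 2 := rfl
  have e2 : wdzbar (fun z => wdz f z) w
      = (fderiv ℝ (fun z => wdz f z) w 1 + Complex.I * fderiv ℝ (fun z => wdz f z) w Complex.I) / 2 := rfl
  rw [e1, e2, key 1, key Complex.I, key2 1, key2 Complex.I, hsymm 1 Complex.I]
  ring

lemma wdz_div {f g : ℂ → ℂ} {w : ℂ} (hf : DifferentiableAt ℝ f w)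
    (hg : DifferentiableAt ℝ g w) (hgw : g w ≠ 0) :
    wdz (fun z => f z / g z) w = (wdz f w * g w - f w * wdz g w) / g w ^ 2 := by
  have hq : DifferentiableAt ℝ (fun z => f z / g z) w := by
    have : (fun z => f z / g z) = fun z => f z * (g z)⁻¹ := by
      funext z; rw [div_eq_mul_inv]
    rw [this]; exact hf.mul (hg.inv hgw)
  have hev : ∀ᶠ z in nhds w, g z ≠ 0 := hg.continuousAt.eventually_ne hgw
  have hfe : f =ᶠ[nhds w] fun z => (f z / g z) * g z := by
    filter_upwards [hev] with z hz
    field_simp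
  have hkey := wdz_congr hfe
  rw [wdz_mul hq hg] at hkey
  have h2 : wdz (fun z => f z / g z) w * g w = wdz f w - f w / g w * wdz g w := by
    rw [hkey]; ring
  field_simp at h2
  rw [eq_div_iff (pow_ne_zero 2 hgw)]
  linear_combination h2

lemma fderiv_ofReal_comp {g : ℂ → ℝ} {w v : ℂ} (hg : DifferentiableAt ℝ g w) :
    fderiv ℝ (fun z => ((g z : ℝ) : ℂ)) w v = ((fderiv ℝ g w v : ℝ) : ℂ) := by
  have : fderiv ℝ (fun z => ((g z : ℝ) : ℂ)) w
      = Complex.ofRealCLM.comp (fderiv ℝ g w) :=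
    (Complex.ofRealCLM.hasFDerivAt.comp w hg.hasFDerivAt).fderiv
  rw [this]; simp

lemma lap_eq {g : ℂ → ℝ} {W : ℂ → ℂ} {w : ℂ}
    (hW : ∀ᶠ z in nhds w, W z = (fderiv ℝ g z 1 : ℂ) + (fderiv ℝ g z Complex.I : ℂ) * Complex.I)
    (hWd : DifferentiableAt ℝ W w) :
    lap g w = (2 * wdz W w).re := by
  have h1 : (fun z => fderiv ℝ g z 1) =ᶠ[nhds w] fun z => (W z).re := by
    filter_upwards [hW] with z hz; rw [hz]; simp
  have h2 : (fun z => fderiv ℝ g z Complex.I) =ᶠ[nhds w] fun z => (W z).im := by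
    filter_upwards [hW] with z hz; rw [hz]; simp
  have hre : fderiv ℝ (fun z => (W z).re) w = Complex.reCLM.comp (fderiv ℝ W w) :=
    (Complex.reCLM.hasFDerivAt.comp w hWd.hasFDerivAt).fderiv
  have him : fderiv ℝ (fun z => (W z).im) w = Complex.imCLM.comp (fderiv ℝ W w) :=
    (Complex.imCLM.hasFDerivAt.comp w hWd.hasFDerivAt).fderiv
  unfold lap
  rw [h1.fderiv_eq, h2.fderiv_eq, hre, him]
  have hcalc : (2 * wdz W w)
      = fderiv ℝ W w 1 - Complex.I * fderiv ℝ W w Complex.I := by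
    unfold wdz; ring
  rw [hcalc]
  simp [Complex.mul_re]

lemma core {f : ℂ → ℂ} {w : ℂ} (hfs : ContDiff ℝ (⊤ : ℕ∞) f) (hfw : f w ≠ 0) :
    wdz (fun z => wdzbar (fun y => f y * (starRingEnd ℂ) (f y)) z
        / (2 * (f z * (starRingEnd ℂ) (f z)))) w
      = (wdz (fun z => wdzbar f z / f z) w
          + (starRingEnd ℂ) (wdz (fun z => wdzbar f z / f z) w)) / 2 := by
  have hconjf : ContDiff ℝ (⊤ : ℕ∞) (fun y => (starRingEnd ℂ) (f y)) :=
    Complex.conjCLE.toContinuousLinearMap.contDiff.comp hfs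
  have hU : ContDiff ℝ (⊤ : ℕ∞) (fun y => f y * (starRingEnd ℂ) (f y)) := hfs.mul hconjf
  have hwbf : ContDiff ℝ (⊤ : ℕ∞) (fun z => wdzbar f z) := contDiff_wdzbar hfs
  have hwdf : ContDiff ℝ (⊤ : ℕ∞) (fun z => wdz f z) := contDiff_wdz hfs
  have hcwdf : ContDiff ℝ (⊤ : ℕ∞) (fun z => (starRingEnd ℂ) (wdz f z)) :=
    Complex.conjCLE.toContinuousLinearMap.contDiff.comp hwdf
  have hwbU : ContDiff ℝ (⊤ : ℕ∞) (fun z => wdzbar (fun y => f y * (starRingEnd ℂ) (f y)) z) :=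
    contDiff_wdzbar hU
  have hFne : (starRingEnd ℂ) (f w) ≠ 0 := by simpa using hfw
  have hdenne : 2 * (f w * (starRingEnd ℂ) (f w)) ≠ 0 :=
    mul_ne_zero two_ne_zero (mul_ne_zero hfw hFne)
  have eU : (fun z => wdzbar (fun y => f y * (starRingEnd ℂ) (f y)) z)
      = fun z => wdzbar f z * (starRingEnd ℂ) (f z) + f z * (starRingEnd ℂ) (wdz f z) := by
    funext z
    rw [wdzbar_mul (hfs.differentiable (by simp) z) (hconjf.differentiable (by simp) z),
      wdzbar_conj (hfs.differentiable (by simp) z)]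
  have vU : wdz (fun y => f y * (starRingEnd ℂ) (f y)) w
      = wdz f w * (starRingEnd ℂ) (f w) + f w * (starRingEnd ℂ) (wdzbar f w) := by
    rw [wdz_mul (hfs.differentiable (by simp) w) (hconjf.differentiable (by simp) w),
      wdz_conj (hfs.differentiable (by simp) w)]
  have vbU : wdzbar (fun y => f y * (starRingEnd ℂ) (f y)) w
      = wdzbar f w * (starRingEnd ℂ) (f w) + f w * (starRingEnd ℂ) (wdz f w) := by
    have := congrFun eU w
    simpa using this
  have vwbU : wdz (fun z => wdzbar (fun y => f y * (starRingEnd ℂ) (f y)) z) w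
      = wdz (fun z => wdzbar f z) w * (starRingEnd ℂ) (f w)
          + wdzbar f w * (starRingEnd ℂ) (wdzbar f w)
        + (wdz f w * (starRingEnd ℂ) (wdz f w)
          + f w * (starRingEnd ℂ) (wdz (fun z => wdzbar f z) w)) := by
    rw [eU]
    rw [wdz_add ((hwbf.differentiable (by simp) w).fun_mul (hconjf.differentiable (by simp) w))
        ((hfs.differentiable (by simp) w).fun_mul (hcwdf.differentiable (by simp) w)),
      wdz_mul (hwbf.differentiable (by simp) w) (hconjf.differentiable (by simp) w),
      wdz_mul (hfs.differentiable (by simp) w) (hcwdf.differentiable (by simp) w),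
      wdz_conj (hfs.differentiable (by simp) w),
      wdz_conj (hwdf.differentiable (by simp) w),
      wdz_wdzbar_comm hfs w]
  -- quotient rules
  have lhs := wdz_div (f := fun z => wdzbar (fun y => f y * (starRingEnd ℂ) (f y)) z)
      (g := fun z => 2 * (f z * (starRingEnd ℂ) (f z)))
      (hwbU.differentiable (by simp) w)
      ((hU.differentiable (by simp) w).const_mul 2) hdenne
  have hden : wdz (fun z => 2 * (f z * (starRingEnd ℂ) (f z))) w
      = 2 * wdz (fun y => f y * (starRingEnd ℂ) (f y)) w :=
    wdz_const_mul (hU.differentiable (by simp) w)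
  have rhs := wdz_div (f := fun z => wdzbar f z) (g := f)
      (hwbf.differentiable (by simp) w) (hfs.differentiable (by simp) w) hfw
  beta_reduce at lhs rhs
  rw [lhs, hden, vwbU, vbU, vU, rhs]
  simp only [map_div₀, map_mul, map_sub, map_pow, Complex.conj_conj, map_add]
  field_simp
  ring

lemma alg1 (A B H : ℂ) (hrne : (1 : ℂ) - H * (starRingEnd ℂ) H ≠ 0)
    (hrne' : (1 : ℂ) - (starRingEnd ℂ) H * H ≠ 0) :
    (2 * ((-(((2 * B * (starRingEnd ℂ) B + 2 * (starRingEnd ℂ) H *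
            -(2 * (starRingEnd ℂ) H * A * (starRingEnd ℂ) B / (1 - H * (starRingEnd ℂ) H))) *
            (1 - H * (starRingEnd ℂ) H) -
          2 * (starRingEnd ℂ) H * (starRingEnd ℂ) B * -(A * (starRingEnd ℂ) H + H * B)) /
          (1 - H * (starRingEnd ℂ) H) ^ 2) +
        (starRingEnd ℂ) (-(((2 * B * (starRingEnd ℂ) B + 2 * (starRingEnd ℂ) H *
            -(2 * (starRingEnd ℂ) H * A * (starRingEnd ℂ) B / (1 - H * (starRingEnd ℂ) H))) *
            (1 - H * (starRingEnd ℂ) H) -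
          2 * (starRingEnd ℂ) H * (starRingEnd ℂ) B * -(A * (starRingEnd ℂ) H + H * B)) /
          (1 - H * (starRingEnd ℂ) H) ^ 2))) / 2 -
      (-(((2 * A * (starRingEnd ℂ) A + 2 * H *
            -(2 * H * B * (starRingEnd ℂ) A / (1 - H * (starRingEnd ℂ) H))) *
            (1 - H * (starRingEnd ℂ) H) -
          2 * H * (starRingEnd ℂ) A * -(A * (starRingEnd ℂ) H + H * B)) /
          (1 - H * (starRingEnd ℂ) H) ^ 2) +
        (starRingEnd ℂ) (-(((2 * A * (starRingEnd ℂ) A + 2 * H *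
            -(2 * H * B * (starRingEnd ℂ) A / (1 - H * (starRingEnd ℂ) H))) *
            (1 - H * (starRingEnd ℂ) H) -
          2 * H * (starRingEnd ℂ) A * -(A * (starRingEnd ℂ) H + H * B)) /
          (1 - H * (starRingEnd ℂ) H) ^ 2))) / 2))
    = ((4 * (Complex.normSq A - Complex.normSq B) / (1 - Complex.normSq H) ^ 2 : ℝ) : ℂ) := by
  simp only [map_neg, map_add, map_sub, map_mul, map_div₀, map_pow, map_one, map_ofNat,
    Complex.conj_conj]
  push_cast
  rw [← Complex.mul_conj, ← Complex.mul_conj, ← Complex.mul_conj]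
  field_simp
  ring

lemma final_algebra (A B H : ℂ) (hA : A ≠ 0) (hB : B ≠ 0) (hH : ‖H‖ < 1) :
    ((2 * ((-(((2 * B * (starRingEnd ℂ) B + 2 * (starRingEnd ℂ) H *
            -(2 * (starRingEnd ℂ) H * A * (starRingEnd ℂ) B / (1 - H * (starRingEnd ℂ) H))) *
            (1 - H * (starRingEnd ℂ) H) -
          2 * (starRingEnd ℂ) H * (starRingEnd ℂ) B * -(A * (starRingEnd ℂ) H + H * B)) /
          (1 - H * (starRingEnd ℂ) H) ^ 2) +
        (starRingEnd ℂ) (-(((2 * B * (starRingEnd ℂ) B + 2 * (starRingEnd ℂ) H *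
            -(2 * (starRingEnd ℂ) H * A * (starRingEnd ℂ) B / (1 - H * (starRingEnd ℂ) H))) *
            (1 - H * (starRingEnd ℂ) H) -
          2 * (starRingEnd ℂ) H * (starRingEnd ℂ) B * -(A * (starRingEnd ℂ) H + H * B)) /
          (1 - H * (starRingEnd ℂ) H) ^ 2))) / 2 -
      (-(((2 * A * (starRingEnd ℂ) A + 2 * H *
            -(2 * H * B * (starRingEnd ℂ) A / (1 - H * (starRingEnd ℂ) H))) *
            (1 - H * (starRingEnd ℂ) H) -
          2 * H * (starRingEnd ℂ) A * -(A * (starRingEnd ℂ) H + H * B)) /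
          (1 - H * (starRingEnd ℂ) H) ^ 2) +
        (starRingEnd ℂ) (-(((2 * A * (starRingEnd ℂ) A + 2 * H *
            -(2 * H * B * (starRingEnd ℂ) A / (1 - H * (starRingEnd ℂ) H))) *
            (1 - H * (starRingEnd ℂ) H) -
          2 * H * (starRingEnd ℂ) A * -(A * (starRingEnd ℂ) H + H * B)) /
          (1 - H * (starRingEnd ℂ) H) ^ 2))) / 2))).re
    = 2 * Real.sinh (2 * (1 / 2 * Real.log (‖A‖ / ‖B‖)))
        * ‖(σD H : ℂ) ^ 2 * A * B‖ := by
  have hnH : Complex.normSq H < 1 := by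
    rw [← Complex.sq_norm]; nlinarith [norm_nonneg H]
  have hr_pos : 0 < 1 - Complex.normSq H := by linarith
  have hrC : (1 : ℂ) - H * (starRingEnd ℂ) H = ((1 - Complex.normSq H : ℝ) : ℂ) := by
    rw [Complex.mul_conj]; push_cast; ring
  have hrne : (1 : ℂ) - H * (starRingEnd ℂ) H ≠ 0 := by
    rw [hrC]; exact_mod_cast ne_of_gt hr_pos
  have hrne' : (1 : ℂ) - (starRingEnd ℂ) H * H ≠ 0 := by
    simpa [mul_comm] using hrne
  rw [alg1 A B H hrne hrne', Complex.ofReal_re]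
  have h2 : (2:ℝ) * (1 / 2 * Real.log (‖A‖ / ‖B‖))
      = Real.log (‖A‖ / ‖B‖) := by ring
  rw [h2, Real.sinh_log (div_pos (norm_pos_iff.mpr hA) (norm_pos_iff.mpr hB))]
  rw [norm_mul, norm_mul, norm_pow, Complex.norm_real, Real.norm_eq_abs]
  have habsH : ‖H‖ ^ 2 < 1 := by
    rw [Complex.sq_norm]; exact hnH
  have hσ : |σD H| = 2 / (1 - ‖H‖ ^ 2) := by
    unfold σD
    exact abs_of_pos (div_pos two_pos (by linarith))
  rw [hσ]
  rw [show Complex.normSq A = ‖A‖ ^ 2 from (Complex.sq_norm A).symm,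
    show Complex.normSq B = ‖B‖ ^ 2 from (Complex.sq_norm B).symm,
    show Complex.normSq H = ‖H‖ ^ 2 from (Complex.sq_norm H).symm]
  have ha := norm_ne_zero_iff.mpr hA
  have hb := norm_ne_zero_iff.mpr hB
  have hc : (1 : ℝ) - ‖H‖ ^ 2 ≠ 0 := by intro e; nlinarith
  field_simp
  ring

/-- sinh-Gordon equation for a harmonic map into `ℍ²` (disk model): with
`ω = ½ log(|h_w|/|h̄_w|)` and `φ = σ(h)² h_w h̄_w`, one has `Δ₀ω = 2 sinh(2ω)|φ|`. -/
theorem stmt2 (Ω : Set ℂ) (hΩ : IsOpen Ω)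
    (h : ℂ → ℂ) (hh : ContDiff ℝ (⊤ : ℕ∞) h)
    (hmap : ∀ w ∈ Ω, ‖h w‖ < 1)
    (hharm : ∀ w ∈ Ω,
      wdzbar (fun z => wdz h z) w
        + (2 * (starRingEnd ℂ) (h w) / (1 - ((‖h w‖ : ℝ) : ℂ)^2))
            * wdz h w * wdzbar h w = 0)
    (hne : ∀ w ∈ Ω, wdz h w ≠ 0 ∧ wdz (fun z => (starRingEnd ℂ) (h z)) w ≠ 0)
    (φ : ℂ → ℂ)
    (hφ : ∀ w ∈ Ω, φ w = (σD (h w) : ℂ)^2 * wdz h w * wdz (fun z => (starRingEnd ℂ) (h z)) w)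
    (ω : ℂ → ℝ)
    (hω : ∀ w ∈ Ω, ω w = (1/2) * Real.log
      (‖wdz h w‖ / ‖wdz (fun z => (starRingEnd ℂ) (h z)) w‖)) :
    ∀ w ∈ Ω, lap ω w = 2 * Real.sinh (2 * ω w) * ‖φ w‖ := by
  intro w hw
  obtain ⟨hA0, hB0⟩ := hne w hw
  have hΩn : Ω ∈ nhds w := hΩ.mem_nhds hw
  have hconjh : ContDiff ℝ (⊤ : ℕ∞) (fun z => (starRingEnd ℂ) (h z)) :=
    Complex.conjCLE.toContinuousLinearMap.contDiff.comp hh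
  have hca : ContDiff ℝ (⊤ : ℕ∞) (fun z => wdz h z) := contDiff_wdz hh
  have hcb : ContDiff ℝ (⊤ : ℕ∞) (fun z => wdz (fun y => (starRingEnd ℂ) (h y)) z) :=
    contDiff_wdz hconjh
  have hcconja : ContDiff ℝ (⊤ : ℕ∞) (fun z => (starRingEnd ℂ) (wdz h z)) :=
    Complex.conjCLE.toContinuousLinearMap.contDiff.comp hca
  have hcconjb : ContDiff ℝ (⊤ : ℕ∞)
      (fun z => (starRingEnd ℂ) (wdz (fun y => (starRingEnd ℂ) (h y)) z)) :=
    Complex.conjCLE.toContinuousLinearMap.contDiff.comp hcb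
  have hUa : ContDiff ℝ (⊤ : ℕ∞) (fun z => wdz h z * (starRingEnd ℂ) (wdz h z)) := hca.mul hcconja
  have hUb : ContDiff ℝ (⊤ : ℕ∞) (fun z => wdz (fun y => (starRingEnd ℂ) (h y)) z
      * (starRingEnd ℂ) (wdz (fun y => (starRingEnd ℂ) (h y)) z)) := hcb.mul hcconjb
  -- the gradient-encoding function
  have hW : ∀ᶠ z in nhds w,
      (wdzbar (fun y => wdz h y * (starRingEnd ℂ) (wdz h y)) z
          / (2 * (wdz h z * (starRingEnd ℂ) (wdz h z)))
        - wdzbar (fun y => wdz (fun x => (starRingEnd ℂ) (h x)) y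
            * (starRingEnd ℂ) (wdz (fun x => (starRingEnd ℂ) (h x)) y)) z
          / (2 * (wdz (fun y => (starRingEnd ℂ) (h y)) z
            * (starRingEnd ℂ) (wdz (fun y => (starRingEnd ℂ) (h y)) z))))
      = ((fderiv ℝ ω z 1 : ℝ) : ℂ) + ((fderiv ℝ ω z Complex.I : ℝ) : ℂ) * Complex.I := by
    filter_upwards [hΩn] with z hz
    obtain ⟨haz, hbz⟩ := hne z hz
    have hra_d : DifferentiableAt ℝ (fun y => (wdz h y * (starRingEnd ℂ) (wdz h y)).re) z :=
      ((Complex.reCLM.contDiff.comp hUa).differentiable (by simp)) z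
    have hrb_d : DifferentiableAt ℝ (fun y => (wdz (fun x => (starRingEnd ℂ) (h x)) y
        * (starRingEnd ℂ) (wdz (fun x => (starRingEnd ℂ) (h x)) y)).re) z :=
      ((Complex.reCLM.contDiff.comp hUb).differentiable (by simp)) z
    have hra_val : ∀ y, (wdz h y * (starRingEnd ℂ) (wdz h y)).re
        = Complex.normSq (wdz h y) := by
      intro y; rw [Complex.mul_conj]; exact Complex.ofReal_re _
    have hrb_val : ∀ y, (wdz (fun x => (starRingEnd ℂ) (h x)) y
        * (starRingEnd ℂ) (wdz (fun x => (starRingEnd ℂ) (h x)) y)).re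
        = Complex.normSq (wdz (fun x => (starRingEnd ℂ) (h x)) y) := by
      intro y; rw [Complex.mul_conj]; exact Complex.ofReal_re _
    have hra_pos : 0 < (wdz h z * (starRingEnd ℂ) (wdz h z)).re := by
      rw [hra_val]; exact Complex.normSq_pos.mpr haz
    have hrb_pos : 0 < (wdz (fun x => (starRingEnd ℂ) (h x)) z
        * (starRingEnd ℂ) (wdz (fun x => (starRingEnd ℂ) (h x)) z)).re := by
      rw [hrb_val]; exact Complex.normSq_pos.mpr hbz
    have H1 := (Real.hasDerivAt_log (ne_of_gt hra_pos)).comp_hasFDerivAt z hra_d.hasFDerivAt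
    have H2 := (Real.hasDerivAt_log (ne_of_gt hrb_pos)).comp_hasFDerivAt z hrb_d.hasFDerivAt
    have H3 := (H1.sub H2).const_mul (4:ℝ)⁻¹
    have heq : ω =ᶠ[nhds z] fun y => (4:ℝ)⁻¹
        * (Real.log ((wdz h y * (starRingEnd ℂ) (wdz h y)).re)
          - Real.log ((wdz (fun x => (starRingEnd ℂ) (h x)) y
            * (starRingEnd ℂ) (wdz (fun x => (starRingEnd ℂ) (h x)) y)).re)) := by
      filter_upwards [hΩ.mem_nhds hz] with y hy
      obtain ⟨hay, hby⟩ := hne y hy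
      rw [hω y hy, hra_val, hrb_val, ← Complex.sq_norm, ← Complex.sq_norm,
        Real.log_pow, Real.log_pow,
        Real.log_div (norm_ne_zero_iff.mpr hay) (norm_ne_zero_iff.mpr hby)]
      push_cast
      ring
    have hωz := H3.congr_of_eventuallyEq heq
    rw [hωz.fderiv]
    -- rewrite the two wdzbar's
    have hUae : (fun y => wdz h y * (starRingEnd ℂ) (wdz h y))
        = fun y => (((wdz h y * (starRingEnd ℂ) (wdz h y)).re : ℝ) : ℂ) := by
      funext y; rw [Complex.mul_conj]; simp
    have hUbe : (fun y => wdz (fun x => (starRingEnd ℂ) (h x)) y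
          * (starRingEnd ℂ) (wdz (fun x => (starRingEnd ℂ) (h x)) y))
        = fun y => (((wdz (fun x => (starRingEnd ℂ) (h x)) y
          * (starRingEnd ℂ) (wdz (fun x => (starRingEnd ℂ) (h x)) y)).re : ℝ) : ℂ) := by
      funext y; rw [Complex.mul_conj]; simp
    have hwUa : wdzbar (fun y => wdz h y * (starRingEnd ℂ) (wdz h y)) z
        = (((fderiv ℝ (fun y => (wdz h y * (starRingEnd ℂ) (wdz h y)).re) z 1 : ℝ) : ℂ)
          + Complex.I * ((fderiv ℝ (fun y => (wdz h y * (starRingEnd ℂ) (wdz h y)).re) z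
            Complex.I : ℝ) : ℂ)) / 2 := by
      rw [hUae]
      simp only [wdzbar]
      rw [fderiv_ofReal_comp hra_d, fderiv_ofReal_comp hra_d]
    have hwUb : wdzbar (fun y => wdz (fun x => (starRingEnd ℂ) (h x)) y
          * (starRingEnd ℂ) (wdz (fun x => (starRingEnd ℂ) (h x)) y)) z
        = (((fderiv ℝ (fun y => (wdz (fun x => (starRingEnd ℂ) (h x)) y
            * (starRingEnd ℂ) (wdz (fun x => (starRingEnd ℂ) (h x)) y)).re) z 1 : ℝ) : ℂ)
          + Complex.I * ((fderiv ℝ (fun y => (wdz (fun x => (starRingEnd ℂ) (h x)) y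
            * (starRingEnd ℂ) (wdz (fun x => (starRingEnd ℂ) (h x)) y)).re) z
            Complex.I : ℝ) : ℂ)) / 2 := by
      rw [hUbe]
      simp only [wdzbar]
      rw [fderiv_ofReal_comp hrb_d, fderiv_ofReal_comp hrb_d]
    have hUaz : wdz h z * (starRingEnd ℂ) (wdz h z)
        = (((wdz h z * (starRingEnd ℂ) (wdz h z)).re : ℝ) : ℂ) := congrFun hUae z
    have hUbz : wdz (fun y => (starRingEnd ℂ) (h y)) z
          * (starRingEnd ℂ) (wdz (fun y => (starRingEnd ℂ) (h y)) z)
        = (((wdz (fun x => (starRingEnd ℂ) (h x)) z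
          * (starRingEnd ℂ) (wdz (fun x => (starRingEnd ℂ) (h x)) z)).re : ℝ) : ℂ) :=
      congrFun hUbe z
    rw [hwUa, hwUb]
    rw [hUaz, hUbz]
    simp only [ContinuousLinearMap.coe_smul', Pi.smul_apply, ContinuousLinearMap.coe_sub',
      Pi.sub_apply, smul_eq_mul]
    set p1 := fderiv ℝ (fun y => (wdz h y * (starRingEnd ℂ) (wdz h y)).re) z 1 with hp1
    set p2 := fderiv ℝ (fun y => (wdz h y * (starRingEnd ℂ) (wdz h y)).re) z Complex.I with hp2
    set q1 := fderiv ℝ (fun y => (wdz (fun x => (starRingEnd ℂ) (h x)) y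
      * (starRingEnd ℂ) (wdz (fun x => (starRingEnd ℂ) (h x)) y)).re) z 1 with hq1
    set q2 := fderiv ℝ (fun y => (wdz (fun x => (starRingEnd ℂ) (h x)) y
      * (starRingEnd ℂ) (wdz (fun x => (starRingEnd ℂ) (h x)) y)).re) z Complex.I with hq2
    set r1 := (wdz h z * (starRingEnd ℂ) (wdz h z)).re with hr1
    set r2 := (wdz (fun x => (starRingEnd ℂ) (h x)) z
      * (starRingEnd ℂ) (wdz (fun x => (starRingEnd ℂ) (h x)) z)).re with hr2
    have c1 : ((r1 : ℝ) : ℂ) ≠ 0 := by exact_mod_cast ne_of_gt hra_pos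
    have c2 : ((r2 : ℝ) : ℂ) ≠ 0 := by exact_mod_cast ne_of_gt hrb_pos
    push_cast
    simp only [Complex.ofReal_re]
    field_simp
    ring
  -- differentiability of the two quotient pieces at w
  have hconjA_ne : (starRingEnd ℂ) (wdz h w) ≠ 0 := by simpa using hA0
  have hconjB_ne : (starRingEnd ℂ) (wdz (fun z => (starRingEnd ℂ) (h z)) w) ≠ 0 := by
    simpa using hB0
  have hUaw_ne : 2 * (wdz h w * (starRingEnd ℂ) (wdz h w)) ≠ 0 :=
    mul_ne_zero two_ne_zero (mul_ne_zero hA0 hconjA_ne)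
  have hUbw_ne : 2 * (wdz (fun y => (starRingEnd ℂ) (h y)) w
      * (starRingEnd ℂ) (wdz (fun y => (starRingEnd ℂ) (h y)) w)) ≠ 0 :=
    mul_ne_zero two_ne_zero (mul_ne_zero hB0 hconjB_ne)
  have hFa_d : DifferentiableAt ℝ (fun z =>
      wdzbar (fun y => wdz h y * (starRingEnd ℂ) (wdz h y)) z
        / (2 * (wdz h z * (starRingEnd ℂ) (wdz h z)))) w := by
    have e : (fun z => wdzbar (fun y => wdz h y * (starRingEnd ℂ) (wdz h y)) z
        / (2 * (wdz h z * (starRingEnd ℂ) (wdz h z))))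
        = fun z => wdzbar (fun y => wdz h y * (starRingEnd ℂ) (wdz h y)) z
          * (2 * (wdz h z * (starRingEnd ℂ) (wdz h z)))⁻¹ := by
      funext z; rw [div_eq_mul_inv]
    rw [e]
    exact ((contDiff_wdzbar hUa).differentiable (by simp) w).mul
      (((hUa.differentiable (by simp) w).const_mul 2).inv hUaw_ne)
  have hFb_d : DifferentiableAt ℝ (fun z =>
      wdzbar (fun y => wdz (fun x => (starRingEnd ℂ) (h x)) y
          * (starRingEnd ℂ) (wdz (fun x => (starRingEnd ℂ) (h x)) y)) z
        / (2 * (wdz (fun y => (starRingEnd ℂ) (h y)) z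
          * (starRingEnd ℂ) (wdz (fun y => (starRingEnd ℂ) (h y)) z)))) w := by
    have e : (fun z => wdzbar (fun y => wdz (fun x => (starRingEnd ℂ) (h x)) y
          * (starRingEnd ℂ) (wdz (fun x => (starRingEnd ℂ) (h x)) y)) z
        / (2 * (wdz (fun y => (starRingEnd ℂ) (h y)) z
          * (starRingEnd ℂ) (wdz (fun y => (starRingEnd ℂ) (h y)) z))))
        = fun z => wdzbar (fun y => wdz (fun x => (starRingEnd ℂ) (h x)) y
          * (starRingEnd ℂ) (wdz (fun x => (starRingEnd ℂ) (h x)) y)) z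
          * (2 * (wdz (fun y => (starRingEnd ℂ) (h y)) z
            * (starRingEnd ℂ) (wdz (fun y => (starRingEnd ℂ) (h y)) z)))⁻¹ := by
      funext z; rw [div_eq_mul_inv]
    rw [e]
    exact ((contDiff_wdzbar hUb).differentiable (by simp) w).mul
      (((hUb.differentiable (by simp) w).const_mul 2).inv hUbw_ne)
  -- basic facts about rho
  have hρ_eq : ∀ z : ℂ, 1 - h z * (starRingEnd ℂ) (h z)
      = ((1 - Complex.normSq (h z) : ℝ) : ℂ) := by
    intro z; rw [Complex.mul_conj]; push_cast; ring
  have hρr_pos : ∀ z ∈ Ω, 0 < 1 - Complex.normSq (h z) := by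
    intro z hz
    have h1 := hmap z hz
    have h2 : Complex.normSq (h z) < 1 := by
      rw [← Complex.sq_norm]
      nlinarith [norm_nonneg (h z)]
    linarith
  have hρ_ne : ∀ z ∈ Ω, (1 - h z * (starRingEnd ℂ) (h z)) ≠ 0 := by
    intro z hz
    rw [hρ_eq]
    exact_mod_cast ne_of_gt (hρr_pos z hz)
  have hwbh : ∀ z : ℂ, wdzbar h z
      = (starRingEnd ℂ) (wdz (fun y => (starRingEnd ℂ) (h y)) z) := by
    intro z
    rw [wdz_conj (hh.differentiable (by simp) z), Complex.conj_conj]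
  -- the harmonic map equation, rearranged
  have hwba : ∀ z ∈ Ω, wdzbar (fun y => wdz h y) z
      = -(2 * (starRingEnd ℂ) (h z)
          * (starRingEnd ℂ) (wdz (fun y => (starRingEnd ℂ) (h y)) z)
          * wdz h z / (1 - h z * (starRingEnd ℂ) (h z))) := by
    intro z hz
    have hh1 := hharm z hz
    have e1 : (1 : ℂ) - ((‖h z‖ : ℝ) : ℂ)^2
        = 1 - h z * (starRingEnd ℂ) (h z) := by
      rw [← Complex.ofReal_pow, Complex.sq_norm, Complex.mul_conj]
    rw [e1, hwbh z] at hh1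
    linear_combination hh1
  have hwbb : ∀ z ∈ Ω, wdzbar (fun y => wdz (fun x => (starRingEnd ℂ) (h x)) y) z
      = -(2 * h z * (starRingEnd ℂ) (wdz h z)
          * wdz (fun y => (starRingEnd ℂ) (h y)) z / (1 - h z * (starRingEnd ℂ) (h z))) := by
    intro z hz
    have hbe : (fun y => wdz (fun x => (starRingEnd ℂ) (h x)) y)
        = fun y => (starRingEnd ℂ) (wdzbar h y) := by
      funext y; exact wdz_conj (hh.differentiable (by simp) y)
    rw [hbe]
    have e2 := wdzbar_conj (f := fun y => wdzbar h y)
      ((contDiff_wdzbar hh).differentiable (by simp) z)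
    beta_reduce at e2
    rw [e2, wdz_wdzbar_comm hh z, hwba z hz]
    have hρreal : (starRingEnd ℂ) (1 - h z * (starRingEnd ℂ) (h z))
        = 1 - h z * (starRingEnd ℂ) (h z) := by
      rw [hρ_eq z]; exact Complex.conj_ofReal _
    simp only [map_neg, map_div₀, map_mul, map_ofNat, Complex.conj_conj, hρreal]
    ring
  -- congruences replacing the quotients by known functions
  have hXa_eq : wdz (fun z => wdzbar (fun y => wdz h y) z / wdz h z) w
      = wdz (fun z => -(2 * (starRingEnd ℂ) (h z)
          * (starRingEnd ℂ) (wdz (fun y => (starRingEnd ℂ) (h y)) z)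
          / (1 - h z * (starRingEnd ℂ) (h z)))) w := by
    apply wdz_congr
    filter_upwards [hΩn] with z hz
    obtain ⟨haz, _⟩ := hne z hz
    rw [hwba z hz]
    field_simp [haz, hρ_ne z hz]
  have hXb_eq : wdz (fun z => wdzbar (fun y => wdz (fun x => (starRingEnd ℂ) (h x)) y) z
        / wdz (fun y => (starRingEnd ℂ) (h y)) z) w
      = wdz (fun z => -(2 * h z * (starRingEnd ℂ) (wdz h z)
          / (1 - h z * (starRingEnd ℂ) (h z)))) w := by
    apply wdz_congr
    filter_upwards [hΩn] with z hz
    obtain ⟨_, hbz⟩ := hne z hz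
    rw [hwbb z hz]
    field_simp [hbz, hρ_ne z hz]
  -- values of auxiliary derivatives at w
  have vCa : wdz (fun z => (starRingEnd ℂ) (wdz h z)) w
      = -(2 * h w * wdz (fun y => (starRingEnd ℂ) (h y)) w
          * (starRingEnd ℂ) (wdz h w) / (1 - h w * (starRingEnd ℂ) (h w))) := by
    have e := wdz_conj (f := fun y => wdz h y) (hca.differentiable (by simp) w)
    beta_reduce at e
    rw [e, hwba w hw]
    have hρreal : (starRingEnd ℂ) (1 - h w * (starRingEnd ℂ) (h w))
        = 1 - h w * (starRingEnd ℂ) (h w) := by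
      rw [hρ_eq w]; exact Complex.conj_ofReal _
    simp only [map_neg, map_div₀, map_mul, map_ofNat, Complex.conj_conj, hρreal]
  have vCb : wdz (fun z => (starRingEnd ℂ) (wdz (fun y => (starRingEnd ℂ) (h y)) z)) w
      = -(2 * (starRingEnd ℂ) (h w) * wdz h w
          * (starRingEnd ℂ) (wdz (fun y => (starRingEnd ℂ) (h y)) w)
          / (1 - h w * (starRingEnd ℂ) (h w))) := by
    have e := wdz_conj (f := fun y => wdz (fun x => (starRingEnd ℂ) (h x)) y)
      (hcb.differentiable (by simp) w)
    beta_reduce at e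
    rw [e, hwbb w hw]
    have hρreal : (starRingEnd ℂ) (1 - h w * (starRingEnd ℂ) (h w))
        = 1 - h w * (starRingEnd ℂ) (h w) := by
      rw [hρ_eq w]; exact Complex.conj_ofReal _
    simp only [map_neg, map_div₀, map_mul, map_ofNat, Complex.conj_conj, hρreal]
  have hρ_d : DifferentiableAt ℝ (fun z => 1 - h z * (starRingEnd ℂ) (h z)) w :=
    (differentiableAt_const 1).sub
      ((hh.differentiable (by simp) w).mul (hconjh.differentiable (by simp) w))
  have vρ : wdz (fun z => 1 - h z * (starRingEnd ℂ) (h z)) w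
      = -(wdz h w * (starRingEnd ℂ) (h w)
          + h w * wdz (fun z => (starRingEnd ℂ) (h z)) w) := by
    rw [wdz_sub (differentiableAt_const 1)
        ((hh.differentiable (by simp) w).fun_mul (hconjh.differentiable (by simp) w)),
      wdz_const, wdz_mul (hh.differentiable (by simp) w) (hconjh.differentiable (by simp) w)]
    ring
  have hNa_d : DifferentiableAt ℝ (fun z => 2 * (starRingEnd ℂ) (h z)
      * (starRingEnd ℂ) (wdz (fun y => (starRingEnd ℂ) (h y)) z)) w :=
    ((hconjh.differentiable (by simp) w).const_mul 2).mul (hcconjb.differentiable (by simp) w)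
  have hNb_d : DifferentiableAt ℝ (fun z => 2 * h z
      * (starRingEnd ℂ) (wdz h z)) w :=
    ((hh.differentiable (by simp) w).const_mul 2).mul (hcconja.differentiable (by simp) w)
  have vNa : wdz (fun z => 2 * (starRingEnd ℂ) (h z)
      * (starRingEnd ℂ) (wdz (fun y => (starRingEnd ℂ) (h y)) z)) w
      = 2 * wdz (fun z => (starRingEnd ℂ) (h z)) w
          * (starRingEnd ℂ) (wdz (fun y => (starRingEnd ℂ) (h y)) w)
        + 2 * (starRingEnd ℂ) (h w)
          * wdz (fun z => (starRingEnd ℂ) (wdz (fun y => (starRingEnd ℂ) (h y)) z)) w := by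
    rw [wdz_mul ((hconjh.differentiable (by simp) w).const_mul 2)
        (hcconjb.differentiable (by simp) w),
      wdz_const_mul (hconjh.differentiable (by simp) w)]
  have vNb : wdz (fun z => 2 * h z * (starRingEnd ℂ) (wdz h z)) w
      = 2 * wdz h w * (starRingEnd ℂ) (wdz h w)
        + 2 * h w * wdz (fun z => (starRingEnd ℂ) (wdz h z)) w := by
    rw [wdz_mul ((hh.differentiable (by simp) w).const_mul 2)
        (hcconja.differentiable (by simp) w),
      wdz_const_mul (hh.differentiable (by simp) w)]
  have vGa : wdz (fun z => -(2 * (starRingEnd ℂ) (h z)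
      * (starRingEnd ℂ) (wdz (fun y => (starRingEnd ℂ) (h y)) z)
      / (1 - h z * (starRingEnd ℂ) (h z)))) w
      = -((wdz (fun z => 2 * (starRingEnd ℂ) (h z)
          * (starRingEnd ℂ) (wdz (fun y => (starRingEnd ℂ) (h y)) z)) w
            * (1 - h w * (starRingEnd ℂ) (h w))
          - (2 * (starRingEnd ℂ) (h w)
            * (starRingEnd ℂ) (wdz (fun y => (starRingEnd ℂ) (h y)) w))
            * wdz (fun z => 1 - h z * (starRingEnd ℂ) (h z)) w)
        / (1 - h w * (starRingEnd ℂ) (h w))^2) := by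
    rw [wdz_neg, wdz_div hNa_d hρ_d (hρ_ne w hw)]
  have vGb : wdz (fun z => -(2 * h z * (starRingEnd ℂ) (wdz h z)
      / (1 - h z * (starRingEnd ℂ) (h z)))) w
      = -((wdz (fun z => 2 * h z * (starRingEnd ℂ) (wdz h z)) w
            * (1 - h w * (starRingEnd ℂ) (h w))
          - (2 * h w * (starRingEnd ℂ) (wdz h w))
            * wdz (fun z => 1 - h z * (starRingEnd ℂ) (h z)) w)
        / (1 - h w * (starRingEnd ℂ) (h w))^2) := by
    rw [wdz_neg, wdz_div hNb_d hρ_d (hρ_ne w hw)]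
  -- the two core identities
  have hXa := core hca hA0
  have hXb := core hcb hB0
  beta_reduce at hXa hXb
  -- put everything together
  rw [lap_eq hW (hFa_d.sub hFb_d), wdz_sub hFa_d hFb_d, hXa, hXb, hXa_eq, hXb_eq,
    vGa, vGb, vNa, vNb, vρ, vCa, vCb, hω w hw, hφ w hw]
  exact final_algebra (wdz h w) (wdz (fun z => (starRingEnd ℂ) (h z)) w) (h w)
    hA0 hB0 (hmap w hw)
end
end

section
/- Let ω, ψ, α, β, θ be real numbers and define R e^{iG} = cos(α+β) cosh ω + i sin(α+β) sinh ω and R^θ e^{iG^θ} = cos(α+β+θ) cosh ω + i sin(α+β+θ) sinh ω with R, R^θ > 0. Then tan(G^θ − G) = sinh(2ω) sin θ / (2 cos θ · R² − sin θ · sin(2(α+β))). -/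
open Real

/-
Writing `z = R e^{iG}` and `w = R^θ e^{iG^θ}`, the product `w z̄ = R^θ R e^{i(G^θ - G)}` has real part
`Re z Re w + Im z Im w` and imaginary part `Re z Im w - Re w Im z`, so `tan(G^θ - G)` is their ratio.
Expanding `cos(α+β+θ)` and `sin(α+β+θ)`, twice the real part is `2 cos θ R² - sin θ sin(2(α+β))`
(using `cosh² - sinh² = 1`) and twice the imaginary part is `sinh(2ω) sin θ`.
-/

lemma cos_sin_of_ofReal_mul_exp_eq {r G a b : ℝ}
    (h : (r : ℂ) * Complex.exp (Complex.I * G) = a + Complex.I * b) :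
    r * cos G = a ∧ r * sin G = b := by
  rw [mul_comm Complex.I] at h
  exact ⟨by simpa using congrArg Complex.re h, by simpa using congrArg Complex.im h⟩

lemma tan_sub_eq_of_polar {r₁ r₂ G₁ G₂ a₁ b₁ a₂ b₂ : ℝ}
    (ha₁ : r₁ * cos G₁ = a₁) (hb₁ : r₁ * sin G₁ = b₁)
    (ha₂ : r₂ * cos G₂ = a₂) (hb₂ : r₂ * sin G₂ = b₂) (hden : a₁ * a₂ + b₁ * b₂ ≠ 0) :
    tan (G₂ - G₁) = (a₁ * b₂ - a₂ * b₁) / (a₁ * a₂ + b₁ * b₂) := by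
  have hcos : a₁ * a₂ + b₁ * b₂ = r₁ * r₂ * cos (G₂ - G₁) := by
    rw [cos_sub, ← ha₁, ← hb₁, ← ha₂, ← hb₂]; ring
  have hsin : a₁ * b₂ - a₂ * b₁ = r₁ * r₂ * sin (G₂ - G₁) := by
    rw [sin_sub, ← ha₁, ← hb₁, ← ha₂, ← hb₂]; ring
  rw [hcos] at hden ⊢
  rw [hsin, tan_eq_sin_div_cos, mul_div_mul_left _ _ (left_ne_zero_of_mul hden)]

lemma two_mul_cross_cosh_sinh (φ θ ω : ℝ) :
    2 * (cos φ * cosh ω * (sin (φ + θ) * sinh ω) - cos (φ + θ) * cosh ω * (sin φ * sinh ω))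
      = sinh (2 * ω) * sin θ := by
  rw [sin_add, cos_add, sinh_two_mul]
  linear_combination 2 * sin θ * sinh ω * cosh ω * sin_sq_add_cos_sq φ

lemma two_mul_dot_cosh_sinh (φ θ ω : ℝ) :
    2 * (cos φ * cosh ω * (cos (φ + θ) * cosh ω) + sin φ * sinh ω * (sin (φ + θ) * sinh ω))
      = 2 * cos θ * ((cos φ * cosh ω) ^ 2 + (sin φ * sinh ω) ^ 2) - sin θ * sin (2 * φ) := by
  rw [sin_add, cos_add, sin_two_mul]
  linear_combination -2 * sin θ * sin φ * cos φ * cosh_sq_sub_sinh_sq ω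

theorem stmt9_general (ω α β θ R G Rθ Gθ : ℝ)
    (h1 : (R : ℂ) * Complex.exp (Complex.I * (G : ℂ))
      = ((Real.cos (α + β) * Real.cosh ω : ℝ) : ℂ)
        + Complex.I * ((Real.sin (α + β) * Real.sinh ω : ℝ) : ℂ))
    (h2 : (Rθ : ℂ) * Complex.exp (Complex.I * (Gθ : ℂ))
      = ((Real.cos (α + β + θ) * Real.cosh ω : ℝ) : ℂ)
        + Complex.I * ((Real.sin (α + β + θ) * Real.sinh ω : ℝ) : ℂ))
    (hden : 2 * Real.cos θ * R^2 - Real.sin θ * Real.sin (2 * (α + β)) ≠ 0) :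
    Real.tan (Gθ - G)
      = Real.sinh (2 * ω) * Real.sin θ
        / (2 * Real.cos θ * R^2 - Real.sin θ * Real.sin (2 * (α + β))) := by
  obtain ⟨hc₁, hs₁⟩ := cos_sin_of_ofReal_mul_exp_eq h1
  obtain ⟨hc₂, hs₂⟩ := cos_sin_of_ofReal_mul_exp_eq h2
  have hR : R ^ 2 = (cos (α + β) * cosh ω) ^ 2 + (sin (α + β) * sinh ω) ^ 2 := by
    rw [← hc₁, ← hs₁]; linear_combination -R ^ 2 * sin_sq_add_cos_sq G
  rw [hR, ← two_mul_dot_cosh_sinh] at hden ⊢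
  rw [tan_sub_eq_of_polar hc₁ hs₁ hc₂ hs₂ (right_ne_zero_of_mul hden),
    ← mul_div_mul_left _ _ two_ne_zero, two_mul_cross_cosh_sinh]

/-- With `R e^{iG} = cos(α+β)cosh ω + i sin(α+β)sinh ω` and
`R^θ e^{iG^θ} = cos(α+β+θ)cosh ω + i sin(α+β+θ)sinh ω` (`R, R^θ > 0`), one has
`tan(G^θ - G) = sinh(2ω) sin θ / (2 cos θ R² - sin θ sin(2(α+β)))`. -/
theorem stmt9 (ω ψ α β θ R G Rθ Gθ : ℝ) (hR : 0 < R) (hRθ : 0 < Rθ)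
    (h1 : (R : ℂ) * Complex.exp (Complex.I * (G : ℂ))
      = ((Real.cos (α + β) * Real.cosh ω : ℝ) : ℂ)
        + Complex.I * ((Real.sin (α + β) * Real.sinh ω : ℝ) : ℂ))
    (h2 : (Rθ : ℂ) * Complex.exp (Complex.I * (Gθ : ℂ))
      = ((Real.cos (α + β + θ) * Real.cosh ω : ℝ) : ℂ)
        + Complex.I * ((Real.sin (α + β + θ) * Real.sinh ω : ℝ) : ℂ))
    (hden : 2 * Real.cos θ * R^2 - Real.sin θ * Real.sin (2 * (α + β)) ≠ 0) :
    Real.tan (Gθ - G)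
      = Real.sinh (2 * ω) * Real.sin θ
        / (2 * Real.cos θ * R^2 - Real.sin θ * Real.sin (2 * (α + β))) :=
  stmt9_general ω α β θ R G Rθ Gθ h1 h2 hden
end

section
/- The Scherk-type function t(x,y) = ln((√(x² + y²) + y)/x), defined for x > 0, y > 0, is a solution of the minimal surface equation for vertical graphs in ℍ² × ℝ with the half-plane model, namely div(∇t/√(1 + y²|∇t|²)) = 0 on {x > 0, y > 0}, where ∇ and div are Euclidean and the hyperbolic metric is (dx² + dy²)/y². -/
noncomputable section

/-- The Scherk-type graph function `t(x,y) = ln((√(x²+y²)+y)/x)` on `{x>0, y>0}`. -/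
def scherk (p : ℝ × ℝ) : ℝ := Real.log ((Real.sqrt (p.1^2 + p.2^2) + p.2) / p.1)

/-- Partial derivatives on `ℝ × ℝ`. -/
def pdx (f : ℝ × ℝ → ℝ) (p : ℝ × ℝ) : ℝ := fderiv ℝ f p (1, 0)
def pdy (f : ℝ × ℝ → ℝ) (p : ℝ × ℝ) : ℝ := fderiv ℝ f p (0, 1)

/-- Area element `W = √(1 + y²|∇t|²)` of the vertical graph of `t` in `ℍ² × ℝ`
(half-plane model, metric `(dx²+dy²)/y²`). -/
def Wgraph (t : ℝ × ℝ → ℝ) (p : ℝ × ℝ) : ℝ :=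
  Real.sqrt (1 + p.2^2 * ((pdx t p)^2 + (pdy t p)^2))

lemma isOpen_quadrant : IsOpen {q : ℝ × ℝ | 0 < q.1 ∧ 0 < q.2} :=
  (isOpen_lt continuous_const continuous_fst).inter (isOpen_lt continuous_const continuous_snd)

lemma sq_hasFDerivAt (p : ℝ × ℝ) :
    HasFDerivAt (fun q : ℝ × ℝ => q.1^2 + q.2^2)
      ((2 * p.1 ^ 1) • ContinuousLinearMap.fst ℝ ℝ ℝ + (2 * p.2 ^ 1) • ContinuousLinearMap.snd ℝ ℝ ℝ) p :=
  (((hasDerivAt_pow 2 p.1).comp_hasFDerivAt p hasFDerivAt_fst).add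
    ((hasDerivAt_pow 2 p.2).comp_hasFDerivAt p hasFDerivAt_snd))

lemma scherk_hasFDerivAt (p : ℝ × ℝ) (hx : 0 < p.1) (hy : 0 < p.2) :
    HasFDerivAt scherk
      (((Real.sqrt (p.1^2+p.2^2) + p.2)⁻¹ •
          ((1 / (2 * Real.sqrt (p.1^2+p.2^2))) •
            ((2 * p.1 ^ 1) • ContinuousLinearMap.fst ℝ ℝ ℝ
              + (2 * p.2 ^ 1) • ContinuousLinearMap.snd ℝ ℝ ℝ)
            + ContinuousLinearMap.snd ℝ ℝ ℝ))
        - p.1⁻¹ • ContinuousLinearMap.fst ℝ ℝ ℝ) p := by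
  have h2 : (0:ℝ) < p.1^2 + p.2^2 := by positivity
  have hr : 0 < Real.sqrt (p.1^2 + p.2^2) := Real.sqrt_pos.mpr h2
  have hry : 0 < Real.sqrt (p.1^2 + p.2^2) + p.2 := by linarith
  have hnum : HasFDerivAt (fun q : ℝ × ℝ => Real.sqrt (q.1^2 + q.2^2) + q.2)
      ((1 / (2 * Real.sqrt (p.1^2+p.2^2))) • ((2 * p.1 ^ 1) • ContinuousLinearMap.fst ℝ ℝ ℝ + (2 * p.2 ^ 1) • ContinuousLinearMap.snd ℝ ℝ ℝ) + ContinuousLinearMap.snd ℝ ℝ ℝ) p :=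
    (((Real.hasDerivAt_sqrt (ne_of_gt h2)).comp_hasFDerivAt p (sq_hasFDerivAt p)).add hasFDerivAt_snd)
  have hg := ((Real.hasDerivAt_log (ne_of_gt hry)).comp_hasFDerivAt p hnum).sub
    ((Real.hasDerivAt_log (ne_of_gt hx)).comp_hasFDerivAt p hasFDerivAt_fst)
  refine hg.congr_of_eventuallyEq ?_
  filter_upwards [isOpen_quadrant.mem_nhds ⟨hx, hy⟩] with q hq
  obtain ⟨hq1, hq2⟩ := hq
  have hq2' : (0:ℝ) < q.1^2 + q.2^2 := by positivity
  have hqr : 0 < Real.sqrt (q.1^2 + q.2^2) := Real.sqrt_pos.mpr hq2'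
  have hpos : 0 < Real.sqrt (q.1^2 + q.2^2) + q.2 := by linarith
  simp only [scherk, Real.log_div hpos.ne' hq1.ne', Function.comp, Pi.sub_apply, Function.comp_apply]

lemma pdx_scherk (p : ℝ × ℝ) (hx : 0 < p.1) (hy : 0 < p.2) :
    pdx scherk p = -p.2 / (p.1 * Real.sqrt (p.1^2+p.2^2)) := by
  have h2 : (0:ℝ) < p.1^2 + p.2^2 := by positivity
  have hr : 0 < Real.sqrt (p.1^2 + p.2^2) := Real.sqrt_pos.mpr h2
  have hr2 : Real.sqrt (p.1^2+p.2^2) ^ 2 = p.1^2 + p.2^2 := Real.sq_sqrt h2.le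
  have hry : 0 < Real.sqrt (p.1^2 + p.2^2) + p.2 := by linarith
  rw [pdx, (scherk_hasFDerivAt p hx hy).fderiv]
  simp only [ContinuousLinearMap.sub_apply, ContinuousLinearMap.smul_apply,
    ContinuousLinearMap.add_apply, ContinuousLinearMap.coe_fst', ContinuousLinearMap.coe_snd',
    smul_eq_mul, pow_one]
  field_simp
  linear_combination (-1) * hr2

lemma pdy_scherk (p : ℝ × ℝ) (hx : 0 < p.1) (hy : 0 < p.2) :
    pdy scherk p = 1 / Real.sqrt (p.1^2+p.2^2) := by
  have h2 : (0:ℝ) < p.1^2 + p.2^2 := by positivity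
  have hr : 0 < Real.sqrt (p.1^2 + p.2^2) := Real.sqrt_pos.mpr h2
  have hr2 : Real.sqrt (p.1^2+p.2^2) ^ 2 = p.1^2 + p.2^2 := Real.sq_sqrt h2.le
  have hry : 0 < Real.sqrt (p.1^2 + p.2^2) + p.2 := by linarith
  rw [pdy, (scherk_hasFDerivAt p hx hy).fderiv]
  simp only [ContinuousLinearMap.sub_apply, ContinuousLinearMap.smul_apply,
    ContinuousLinearMap.add_apply, ContinuousLinearMap.coe_fst', ContinuousLinearMap.coe_snd',
    smul_eq_mul, pow_one]
  field_simp
  ring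

lemma W_scherk (p : ℝ × ℝ) (hx : 0 < p.1) (hy : 0 < p.2) :
    Wgraph scherk p = Real.sqrt (p.1^2+p.2^2) / p.1 := by
  have h2 : (0:ℝ) < p.1^2 + p.2^2 := by positivity
  have hr : 0 < Real.sqrt (p.1^2 + p.2^2) := Real.sqrt_pos.mpr h2
  have hr2 : Real.sqrt (p.1^2+p.2^2) ^ 2 = p.1^2 + p.2^2 := Real.sq_sqrt h2.le
  rw [Wgraph, pdx_scherk p hx hy, pdy_scherk p hx hy]
  have key : 1 + p.2^2 * ((-p.2 / (p.1 * Real.sqrt (p.1^2+p.2^2)))^2 + (1 / Real.sqrt (p.1^2+p.2^2))^2)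
      = (Real.sqrt (p.1^2+p.2^2) / p.1)^2 := by
    field_simp
    linear_combination (p.1^2 - Real.sqrt (p.1^2+p.2^2)^2 - (p.1^2+p.2^2)) * hr2
  rw [key, Real.sqrt_sq (by positivity)]

lemma ratio_x (p : ℝ × ℝ) (hx : 0 < p.1) (hy : 0 < p.2) :
    pdx scherk p / Wgraph scherk p = -p.2 * ((p.1^2+p.2^2)⁻¹) := by
  have h2 : (0:ℝ) < p.1^2 + p.2^2 := by positivity
  have hr : 0 < Real.sqrt (p.1^2 + p.2^2) := Real.sqrt_pos.mpr h2
  have hr2 : Real.sqrt (p.1^2+p.2^2) ^ 2 = p.1^2 + p.2^2 := Real.sq_sqrt h2.le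
  rw [pdx_scherk p hx hy, W_scherk p hx hy]
  field_simp
  linear_combination (1) * hr2

lemma ratio_y (p : ℝ × ℝ) (hx : 0 < p.1) (hy : 0 < p.2) :
    pdy scherk p / Wgraph scherk p = p.1 * ((p.1^2+p.2^2)⁻¹) := by
  have h2 : (0:ℝ) < p.1^2 + p.2^2 := by positivity
  have hr : 0 < Real.sqrt (p.1^2 + p.2^2) := Real.sqrt_pos.mpr h2
  have hr2 : Real.sqrt (p.1^2+p.2^2) ^ 2 = p.1^2 + p.2^2 := Real.sq_sqrt h2.le
  rw [pdy_scherk p hx hy, W_scherk p hx hy]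
  field_simp
  linear_combination -hr2

/-- The Scherk-type function solves the minimal vertical-graph equation
`div(∇t/√(1 + y²|∇t|²)) = 0` in `ℍ² × ℝ` on the quadrant `{x>0, y>0}`. -/
theorem stmt16 :
    ∀ p : ℝ × ℝ, 0 < p.1 → 0 < p.2 →
      pdx (fun q => pdx scherk q / Wgraph scherk q) p
        + pdy (fun q => pdy scherk q / Wgraph scherk q) p = 0 := by
  intro p hx hy
  have h2 : (0:ℝ) < p.1^2 + p.2^2 := by positivity
  have hmem := isOpen_quadrant.mem_nhds (⟨hx, hy⟩ : p ∈ {q : ℝ × ℝ | 0 < q.1 ∧ 0 < q.2})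
  have hinv : HasFDerivAt (fun q : ℝ × ℝ => (q.1^2 + q.2^2)⁻¹)
      ((-((p.1^2+p.2^2)^2)⁻¹) • ((2 * p.1 ^ 1) • ContinuousLinearMap.fst ℝ ℝ ℝ + (2 * p.2 ^ 1) • ContinuousLinearMap.snd ℝ ℝ ℝ)) p :=
    (hasDerivAt_inv h2.ne').comp_hasFDerivAt p (sq_hasFDerivAt p)
  have hF1 : HasFDerivAt (fun q : ℝ × ℝ => -q.2 * ((q.1^2+q.2^2)⁻¹)) _ p := ((hasFDerivAt_snd : HasFDerivAt (fun q : ℝ × ℝ => q.2) _ p).neg.mul hinv)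
  have hF2 : HasFDerivAt (fun q : ℝ × ℝ => q.1 * ((q.1^2+q.2^2)⁻¹)) _ p := ((hasFDerivAt_fst : HasFDerivAt (fun q : ℝ × ℝ => q.1) _ p).mul hinv)
  have e1 : (fun q : ℝ × ℝ => pdx scherk q / Wgraph scherk q)
      =ᶠ[nhds p] (fun q : ℝ × ℝ => -q.2 * ((q.1^2+q.2^2)⁻¹)) := by
    filter_upwards [hmem] with q hq using ratio_x q hq.1 hq.2
  have e2 : (fun q : ℝ × ℝ => pdy scherk q / Wgraph scherk q)
      =ᶠ[nhds p] (fun q : ℝ × ℝ => q.1 * ((q.1^2+q.2^2)⁻¹)) := by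
    filter_upwards [hmem] with q hq using ratio_y q hq.1 hq.2
  rw [pdx, pdy, e1.fderiv_eq, e2.fderiv_eq, hF1.fderiv, hF2.fderiv]
  simp only [ContinuousLinearMap.smul_apply, ContinuousLinearMap.sub_apply,
    ContinuousLinearMap.add_apply, ContinuousLinearMap.coe_fst', ContinuousLinearMap.coe_snd',
    ContinuousLinearMap.neg_apply, smul_eq_mul, pow_one, Pi.neg_apply]
  field_simp
  ring
end
end
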